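/- In a prediction space in which all cumulative distribution functions in the class 𝓕 (containing F almost surely) are continuous and strictly increasing on a shared support interval, and Assumption (T) holds for all quantile functionals, CEP calibration and quantile calibration of the predictive distribution F are equivalent, and each implies probabilistic calibration of F. -/

import Mathlib

open MeasureTheory ProbabilityTheory

noncomputable section

/-- The cumulative distribution function of a measure `G` on `ℝ`, evaluated at `y`. -/
def cdfAt (G : Measure ℝ) (y : ℝ) : ℝ := (G (Set.Iic y)).toReal

/-- The left limit `G(y−)` of the CDF of `G` at `y`. -/
def cdfLt (G : Measure ℝ) (y : ℝ) : ℝ := (G (Set.Iio y)).toReal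

/-- The lower `α`-quantile `q_α^-(G) = inf {x : G(x) ≥ α}`. -/
def lowerQuantile (G : Measure ℝ) (α : ℝ) : ℝ := sInf {x : ℝ | α ≤ cdfAt G x}

/-- The upper `α`-quantile `q_α^+(G) = sup {x : G(x−) ≤ α}`. -/
def upperQuantile (G : Measure ℝ) (α : ℝ) : ℝ := sSup {x : ℝ | cdfLt G x ≤ α}

variable {Ω : Type*} [MeasurableSpace Ω]

/-- The (randomized) probability integral transform `Z_F = F(Y−) + U (F(Y) − F(Y−))`. -/
def PIT (F : Ω → Measure ℝ) (Y U : Ω → ℝ) (ω : Ω) : ℝ :=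
  cdfLt (F ω) (Y ω) + U ω * (cdfAt (F ω) (Y ω) - cdfLt (F ω) (Y ω))

/-- The uniform distribution on `[0,1]`. -/
def unif01 : Measure ℝ := volume.restrict (Set.Icc (0:ℝ) 1)

/-- A prediction space: a probability space carrying a random probability measure `F` on `ℝ`
(the predictive distribution), an outcome `Y`, and a uniform random variable `U` that is
independent of the σ-algebra generated by `F` and `Y`. -/
structure IsPredictionSpace (μ : Measure Ω) (F : Ω → Measure ℝ) (Y U : Ω → ℝ) : Prop where
  isProb : IsProbabilityMeasure μ
  probF : ∀ ω, IsProbabilityMeasure (F ω)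
  measF : Measurable F
  measY : Measurable Y
  measU : Measurable U
  unifU : μ.map U = unif01
  indepU : Indep (MeasurableSpace.comap U inferInstance)
    (MeasurableSpace.comap F inferInstance ⊔ MeasurableSpace.comap Y inferInstance) μ

/-- `F` is auto-calibrated: `F(y) = Q(Y ≤ y | σ(F))` a.s. for every `y`. -/
def AutoCalibrated (μ : Measure Ω) (F : Ω → Measure ℝ) (Y : Ω → ℝ) : Prop :=
  ∀ y : ℝ, (fun ω => cdfAt (F ω) y)
    =ᵐ[μ] μ[Set.indicator {ω | Y ω ≤ y} (fun _ => (1:ℝ)) | MeasurableSpace.comap F inferInstance]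

/-- `F` is probabilistically calibrated: the PIT is uniform on `[0,1]`. -/
def ProbCalibrated (μ : Measure Ω) (F : Ω → Measure ℝ) (Y U : Ω → ℝ) : Prop :=
  μ.map (PIT F Y U) = unif01

/-- `F` is marginally calibrated: `E[F(y)] = Q(Y ≤ y)` for every `y`. -/
def MargCalibrated (μ : Measure Ω) (F : Ω → Measure ℝ) (Y : Ω → ℝ) : Prop :=
  ∀ y : ℝ, ∫ ω, cdfAt (F ω) y ∂μ = (μ {ω | Y ω ≤ y}).toReal

/-- `F` is CEP calibrated: `Q(Z_F ≤ α | q_α^-(F)) = α` a.s. for every `α ∈ (0,1)`. -/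
def CEPCalibrated (μ : Measure Ω) (F : Ω → Measure ℝ) (Y U : Ω → ℝ) : Prop :=
  ∀ α ∈ Set.Ioo (0:ℝ) 1,
    μ[Set.indicator {ω | PIT F Y U ω ≤ α} (fun _ => (1:ℝ)) |
      MeasurableSpace.comap (fun ω => lowerQuantile (F ω) α) inferInstance]
      =ᵐ[μ] fun _ => α

/-- `F` is threshold calibrated: `Q(Y ≤ t | F(t)) = F(t)` a.s. for every `t`. -/
def ThreshCalibrated (μ : Measure Ω) (F : Ω → Measure ℝ) (Y : Ω → ℝ) : Prop :=
  ∀ t : ℝ,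
    μ[Set.indicator {ω | Y ω ≤ t} (fun _ => (1:ℝ)) |
      MeasurableSpace.comap (fun ω => cdfAt (F ω) t) inferInstance]
      =ᵐ[μ] fun ω => cdfAt (F ω) t

/-- An identification function: measurable, increasing and left-continuous in its
first argument. -/
structure IsIdentificationFunction (V : ℝ → ℝ → ℝ) : Prop where
  meas : Measurable (Function.uncurry V)
  mono : ∀ y : ℝ, Monotone fun x => V x y
  leftCont : ∀ y x : ℝ, ContinuousWithinAt (fun x => V x y) (Set.Iic x) x

/-- Lower bound `T^-(G) = sup {x : ∫ V(x,y) dG(y) < 0}` of the functional induced by `V`. -/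
def Tminus (V : ℝ → ℝ → ℝ) (G : Measure ℝ) : ℝ := sSup {x : ℝ | ∫ y, V x y ∂G < 0}

/-- Upper bound `T^+(G) = inf {x : ∫ V(x,y) dG(y) > 0}` of the functional induced by `V`. -/
def Tplus (V : ℝ → ℝ → ℝ) (G : Measure ℝ) : ℝ := sInf {x : ℝ | 0 < ∫ y, V x y ∂G}

/-- `V` is of prediction error form `V(x,y) = v(x−y)`. -/
def PredErrorForm (V : ℝ → ℝ → ℝ) : Prop :=
  ∃ v : ℝ → ℝ, Monotone v ∧ (∀ x : ℝ, ContinuousWithinAt v (Set.Iic x) x) ∧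
    (∃ r : ℝ, 0 < r ∧ v (-r) < 0 ∧ 0 < v r) ∧ ∀ x y : ℝ, V x y = v (x - y)

/-- `V` is of the form `V(x,y) = x − T(δ_y)` for a singleton-valued functional `T`. -/
def DiracSingletonForm (V : ℝ → ℝ → ℝ) : Prop :=
  (∀ y : ℝ, Tminus V (Measure.dirac y) = Tplus V (Measure.dirac y)) ∧
  ∀ x y : ℝ, V x y = x - Tminus V (Measure.dirac y)

/-- Assumption (V): `V` induces the functional on a convex class `𝓕₀ ⊇ 𝓕` of probability
measures containing all Dirac measures, and `V` is of prediction error form or of the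
form `V(x,y) = x − T(δ_y)` for a singleton-valued `T`. -/
structure AssumptionV (V : ℝ → ℝ → ℝ) (𝓕 : Set (Measure ℝ)) : Prop where
  inducing : ∃ 𝓕₀ : Set (Measure ℝ), 𝓕 ⊆ 𝓕₀ ∧ (∀ G ∈ 𝓕₀, IsProbabilityMeasure G) ∧
    (∀ y : ℝ, Measure.dirac y ∈ 𝓕₀) ∧
    (∀ G₁ ∈ 𝓕₀, ∀ G₂ ∈ 𝓕₀, ∀ p : ℝ, 0 ≤ p → p ≤ 1 →
      ENNReal.ofReal p • G₁ + ENNReal.ofReal (1 - p) • G₂ ∈ 𝓕₀) ∧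
    ∀ G ∈ 𝓕₀, ∀ x : ℝ, Integrable (fun y => V x y) G
  form : PredErrorForm V ∨ DiracSingletonForm V

/-- The pair `(T^-(F), T^+(F))` of the interval-valued functional applied to the
random predictive distribution. -/
def TpairOf (V : ℝ → ℝ → ℝ) (F : Ω → Measure ℝ) (ω : Ω) : ℝ × ℝ :=
  (Tminus V (F ω), Tplus V (F ω))

/-- Conditional `T`-calibration of the predictive distribution `F`:
`T(L(Y | T(F))) = T(F)` almost surely. -/
def CondTCalibrated (μ : Measure Ω) [IsFiniteMeasure μ] (V : ℝ → ℝ → ℝ)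
    (F : Ω → Measure ℝ) (Y : Ω → ℝ) : Prop :=
  ∀ᵐ ω ∂μ,
    Tminus V (condDistrib Y (TpairOf V F) μ (TpairOf V F ω)) = Tminus V (F ω) ∧
    Tplus V (condDistrib Y (TpairOf V F) μ (TpairOf V F ω)) = Tplus V (F ω)

/-- Unconditional `T`-calibration of the predictive distribution `F`. -/
def UncondTCalibrated (μ : Measure Ω) (V : ℝ → ℝ → ℝ)
    (F : Ω → Measure ℝ) (Y : Ω → ℝ) : Prop :=
  ∀ ε : ℝ, 0 < ε →
    (∫ ω, V (Tplus V (F ω) - ε) (Y ω) ∂μ) ≤ 0 ∧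
    0 ≤ ∫ ω, V (Tminus V (F ω) + ε) (Y ω) ∂μ

/-- Unconditional `T`-calibration of a single-valued point forecast `X`. -/
def UncondCalibratedPt (μ : Measure Ω) (V : ℝ → ℝ → ℝ) (X Y : Ω → ℝ) : Prop :=
  ∀ ε : ℝ, 0 < ε →
    (∫ ω, V (X ω - ε) (Y ω) ∂μ) ≤ 0 ∧ 0 ≤ ∫ ω, V (X ω + ε) (Y ω) ∂μ

/-- The sets defining `T^-(G)` and `T^+(G)` are nonempty and bounded, so that the induced
functional is well defined and finite at `G`. -/
def TWellDefined (V : ℝ → ℝ → ℝ) (G : Measure ℝ) : Prop :=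
  {x : ℝ | ∫ y, V x y ∂G < 0}.Nonempty ∧ BddAbove {x : ℝ | ∫ y, V x y ∂G < 0} ∧
  {x : ℝ | 0 < ∫ y, V x y ∂G}.Nonempty ∧ BddBelow {x : ℝ | 0 < ∫ y, V x y ∂G}

/-- The elementary loss `S_η(x,y) = (1{η ≤ x} − 1{η ≤ y}) V(η,y)`. -/
def elemLoss (V : ℝ → ℝ → ℝ) (η x y : ℝ) : ℝ :=
  ((if η ≤ x then (1:ℝ) else 0) - if η ≤ y then (1:ℝ) else 0) * V η y

/-- `S` has mixture (Choquet) form with respect to the identification function `V`. -/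
def MixtureForm (V S : ℝ → ℝ → ℝ) : Prop :=
  ∃ H : Measure ℝ, IsLocallyFiniteMeasure H ∧
    ∀ x y : ℝ, S x y = ∫ η, elemLoss V η x y ∂H

/-- `S` is a canonical loss for the functional induced by `V`. -/
def IsCanonicalLoss (V S : ℝ → ℝ → ℝ) : Prop :=
  (∀ x y : ℝ, 0 ≤ S x y) ∧
  ∃ a : ℝ, 0 < a ∧ ∃ b : ℝ → ℝ, Measurable b ∧
    ∀ x y : ℝ, S x y = a * (∫ η, elemLoss V η x y) + b y

/-- `S` is a consistent scoring function for the functional induced by `V` on the class `𝓕`. -/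
def ConsistentFor (S V : ℝ → ℝ → ℝ) (𝓕 : Set (Measure ℝ)) : Prop :=
  ∀ G ∈ 𝓕, ∀ t ∈ Set.Icc (Tminus V G) (Tplus V G), ∀ x : ℝ,
    ∫ y, S t y ∂G ≤ ∫ y, S x y ∂G

/-- `S` is a strictly consistent scoring function for the functional induced by `V` on `𝓕`. -/
def StrictlyConsistentFor (S V : ℝ → ℝ → ℝ) (𝓕 : Set (Measure ℝ)) : Prop :=
  ConsistentFor S V 𝓕 ∧
  ∀ G ∈ 𝓕, ∀ t ∈ Set.Icc (Tminus V G) (Tplus V G), ∀ x : ℝ,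
    x ∉ Set.Icc (Tminus V G) (Tplus V G) → ∫ y, S t y ∂G < ∫ y, S x y ∂G

/-- The empirical distribution of the outcomes `y i`, `i ∈ s`. -/
def empOn {n : ℕ} (y : Fin n → ℝ) (s : Finset (Fin n)) : Measure ℝ :=
  (s.card : ENNReal)⁻¹ • ∑ i ∈ s, Measure.dirac (y i)

/-- A locally bounded real function of a real variable. -/
def LocallyBdd (f : ℝ → ℝ) : Prop :=
  ∀ η₀ : ℝ, ∃ ε : ℝ, 0 < ε ∧ ∃ C : ℝ, ∀ η : ℝ, |η - η₀| < ε → |f η| ≤ C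

/-- All CDFs in the class `𝓕` are continuous and strictly increasing on a shared
support interval. -/
def CSI (𝓕 : Set (Measure ℝ)) : Prop :=
  ∃ S : Set ℝ, S.Nonempty ∧ S.OrdConnected ∧ ∀ G ∈ 𝓕,
    Continuous (cdfAt G) ∧ StrictMonoOn (cdfAt G) S ∧ G Sᶜ = 0

/-- The conditioning variable for quantile calibration at level `α`: the interval of
`α`-quantiles, represented by its endpoints. -/
def qPairOf (F : Ω → Measure ℝ) (α : ℝ) (ω : Ω) : ℝ × ℝ :=
  (lowerQuantile (F ω) α, upperQuantile (F ω) α)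

/-- `F` is quantile calibrated: for every `α ∈ (0,1)`,
`q_α(L(Y | q_α(F))) = q_α(F)` almost surely. -/
def QuantileCalibrated (μ : Measure Ω) [IsFiniteMeasure μ]
    (F : Ω → Measure ℝ) (Y : Ω → ℝ) : Prop :=
  ∀ α ∈ Set.Ioo (0:ℝ) 1, ∀ᵐ ω ∂μ,
    lowerQuantile (condDistrib Y (qPairOf F α) μ (qPairOf F α ω)) α
      = lowerQuantile (F ω) α ∧
    upperQuantile (condDistrib Y (qPairOf F α) μ (qPairOf F α ω)) α
      = upperQuantile (F ω) α

/-!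
When every CDF in play is continuous and strictly increasing on the common support interval,
each `α ∈ (0,1)` has a unique `α`-quantile: `q_α(F) = {ℓ}` with `ℓ = q_α^-(F)`, the PIT is
`F(Y)`, and `{Z_F ≤ α} = {Y ≤ ℓ}` almost surely. Conditioning on `ℓ` or on `q_α(F)` is then
the same, so CEP calibration at level `α` says that the conditional law of `Y` given `q_α(F)`
puts mass exactly `α` on `(-∞, ℓ]`, which for such a law means that its `α`-quantile is `ℓ`:
this is quantile calibration. Integrating CEP calibration gives `Q(Z_F ≤ α) = α` for all
`α ∈ (0,1)`, which determines the law of `Z_F` as uniform.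
-/

open Set Filter

section CDF

variable {G : Measure ℝ} {S : Set ℝ} {α q : ℝ}

structure IsStrictCDFOn (G : Measure ℝ) (S : Set ℝ) : Prop where
  continuous : Continuous (cdfAt G)
  strictMonoOn : StrictMonoOn (cdfAt G) S
  measure_compl : G Sᶜ = 0

lemma lowerQuantile_eq_of_forall_le_cdfAt_iff (h : ∀ y, α ≤ cdfAt G y ↔ q ≤ y) :
    lowerQuantile G α = q := by
  rw [lowerQuantile, show {x | α ≤ cdfAt G x} = Ici q from ext h, csInf_Ici]

lemma upperQuantile_eq_of_forall_cdfLt_le_iff (h : ∀ y, cdfLt G y ≤ α ↔ y ≤ q) :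
    upperQuantile G α = q := by
  rw [upperQuantile, show {x | cdfLt G x ≤ α} = Iic q from ext h, csSup_Iic]

lemma cdfAt_nonneg (y : ℝ) : 0 ≤ cdfAt G y := ENNReal.toReal_nonneg

variable [IsProbabilityMeasure G]

lemma cdfAt_eq_cdf : cdfAt G = cdf G := by
  funext x
  rw [cdf_eq_real]
  rfl

lemma cdfAt_le_one (y : ℝ) : cdfAt G y ≤ 1 := measureReal_le_one

lemma monotone_cdfAt : Monotone (cdfAt G) := cdfAt_eq_cdf (G := G) ▸ (cdf G).mono

lemma cdfLt_eq_cdfAt (hc : Continuous (cdfAt G)) : cdfLt G = cdfAt G := by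
  rw [cdfAt_eq_cdf] at hc ⊢
  funext x
  have hIio : G (Iio x) = ENNReal.ofReal (cdf G x) := by
    conv_lhs => rw [← measure_cdf G]
    rw [StieltjesFunction.measure_Iio _ (tendsto_cdf_atBot G), sub_zero,
      hc.continuousWithinAt.leftLim_eq]
  rw [cdfLt, hIio, ENNReal.toReal_ofReal (cdf_nonneg G x)]

lemma exists_cdfAt_eq (hc : Continuous (cdfAt G)) (hα : α ∈ Ioo 0 1) : ∃ q, cdfAt G q = α := by
  rw [cdfAt_eq_cdf] at hc ⊢
  exact mem_range_of_exists_le_of_exists_ge hc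
    ((tendsto_cdf_atBot G).eventually_le_const hα.1).exists
    ((tendsto_cdf_atTop G).eventually_const_le hα.2).exists

-- Off an order-connected carrier `S`, the CDF is `0` to the left of `S` and `1` to its right.
lemma mem_of_cdfAt_mem_Ioo (hS : S.OrdConnected) (hGS : G Sᶜ = 0) {y : ℝ}
    (hy : cdfAt G y ∈ Ioo 0 1) : y ∈ S := by
  obtain ⟨s₁, hs₁, hs₁y⟩ : ∃ s ∈ S, s ≤ y := by
    by_contra! h
    have : G (Iic y) = 0 := measure_mono_null (fun x hx hxS => (h x hxS).not_ge hx) hGS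
    exact hy.1.ne' (by rw [cdfAt, this, ENNReal.toReal_zero])
  obtain ⟨s₂, hs₂, hys₂⟩ : ∃ s ∈ S, y ≤ s := by
    by_contra! h
    have : G (Iic y)ᶜ = 0 :=
      measure_mono_null (fun x hx hxS => (h x hxS).not_ge (le_of_lt (not_le.1 hx))) hGS
    rw [prob_compl_eq_zero_iff measurableSet_Iic] at this
    exact hy.2.ne (by rw [cdfAt, this, ENNReal.toReal_one])
  exact hS.out hs₁ hs₂ ⟨hs₁y, hys₂⟩

lemma IsStrictCDFOn.cdfAt_lt_cdfAt (hG : IsStrictCDFOn G S) (hS : S.OrdConnected) {y₁ y₂ : ℝ}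
    (hlt : y₁ < y₂) (h₁ : cdfAt G y₁ < 1) (h₂ : 0 < cdfAt G y₂) : cdfAt G y₁ < cdfAt G y₂ := by
  rcases (cdfAt_nonneg (G := G) y₁).eq_or_lt with h₁' | h₁'
  · rwa [← h₁']
  rcases (cdfAt_le_one (G := G) y₂).lt_or_eq with h₂' | h₂'
  · exact hG.strictMonoOn (mem_of_cdfAt_mem_Ioo hS hG.measure_compl ⟨h₁', h₁⟩)
      (mem_of_cdfAt_mem_Ioo hS hG.measure_compl ⟨h₂, h₂'⟩) hlt
  · rwa [h₂']

lemma IsStrictCDFOn.lowerQuantile_eq (hG : IsStrictCDFOn G S) (hS : S.OrdConnected)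
    (hα : α ∈ Ioo 0 1) (hq : cdfAt G q = α) : lowerQuantile G α = q := by
  refine lowerQuantile_eq_of_forall_le_cdfAt_iff fun y => ⟨fun hy => ?_, fun hy => ?_⟩
  · by_contra! hyq
    have := hG.cdfAt_lt_cdfAt hS hyq (by linarith [monotone_cdfAt (G := G) hyq.le, hα.2])
      (hq ▸ hα.1)
    linarith
  · exact hq ▸ monotone_cdfAt hy

lemma IsStrictCDFOn.cdfAt_le_iff (hG : IsStrictCDFOn G S) (hS : S.OrdConnected)
    (hα : α ∈ Ioo 0 1) (hq : cdfAt G q = α) {y : ℝ} : cdfAt G y ≤ α ↔ y ≤ q := by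
  refine ⟨fun hy => ?_, fun hy => hq ▸ monotone_cdfAt hy⟩
  by_contra! hqy
  have := hG.cdfAt_lt_cdfAt hS hqy (hq ▸ hα.2) (by linarith [monotone_cdfAt (G := G) hqy.le, hα.1])
  linarith

lemma IsStrictCDFOn.cdfAt_lowerQuantile (hG : IsStrictCDFOn G S) (hS : S.OrdConnected)
    (hα : α ∈ Ioo 0 1) : cdfAt G (lowerQuantile G α) = α := by
  obtain ⟨q, hq⟩ := exists_cdfAt_eq hG.continuous hα
  rwa [hG.lowerQuantile_eq hS hα hq]

lemma IsStrictCDFOn.cdfAt_le_iff_le_lowerQuantile (hG : IsStrictCDFOn G S)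
    (hS : S.OrdConnected) (hα : α ∈ Ioo 0 1) {y : ℝ} :
    cdfAt G y ≤ α ↔ y ≤ lowerQuantile G α :=
  hG.cdfAt_le_iff hS hα (hG.cdfAt_lowerQuantile hS hα)

lemma IsStrictCDFOn.cdfAt_eq_iff_lowerQuantile_eq (hG : IsStrictCDFOn G S)
    (hS : S.OrdConnected) (hα : α ∈ Ioo 0 1) {y : ℝ} :
    cdfAt G y = α ↔ lowerQuantile G α = y :=
  ⟨hG.lowerQuantile_eq hS hα, fun hy => hy ▸ hG.cdfAt_lowerQuantile hS hα⟩

lemma IsStrictCDFOn.upperQuantile_eq_lowerQuantile (hG : IsStrictCDFOn G S)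
    (hS : S.OrdConnected) (hα : α ∈ Ioo 0 1) : upperQuantile G α = lowerQuantile G α :=
  upperQuantile_eq_of_forall_cdfLt_le_iff fun y => by
    rw [cdfLt_eq_cdfAt hG.continuous, hG.cdfAt_le_iff_le_lowerQuantile hS hα]

end CDF

section Uniform

lemma cdf_eq_max_zero_min_one_of_eqOn_Ioo (ν : Measure ℝ) [IsProbabilityMeasure ν]
    (h : ∀ α ∈ Ioo (0 : ℝ) 1, cdf ν α = α) (t : ℝ) : cdf ν t = max 0 (min t 1) := by
  rcases le_or_gt t 0 with ht | ht
  · rw [max_eq_left (min_le_of_left_le ht)]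
    refine le_antisymm (le_of_forall_gt_imp_ge_of_dense fun c hc => ?_) (cdf_nonneg ν t)
    have hs : min c 2⁻¹ ∈ Ioo (0 : ℝ) 1 := ⟨lt_min hc (by norm_num), by norm_num⟩
    calc cdf ν t ≤ cdf ν (min c 2⁻¹) := (cdf ν).mono (ht.trans hs.1.le)
      _ = min c 2⁻¹ := h _ hs
      _ ≤ c := min_le_left _ _
  rcases lt_or_ge t 1 with ht1 | ht1
  · rw [min_eq_left ht1.le, max_eq_right ht.le]
    exact h t ⟨ht, ht1⟩
  · rw [min_eq_right ht1, max_eq_right zero_le_one]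
    refine le_antisymm (cdf_le_one ν t) (le_of_forall_lt_imp_le_of_dense fun c hc => ?_)
    have hs : max c 2⁻¹ ∈ Ioo (0 : ℝ) 1 := ⟨by positivity, max_lt hc (by norm_num)⟩
    calc c ≤ max c 2⁻¹ := le_max_left _ _
      _ = cdf ν (max c 2⁻¹) := (h _ hs).symm
      _ ≤ cdf ν t := (cdf ν).mono (hs.2.le.trans ht1)

instance isProbabilityMeasure_unif01 : IsProbabilityMeasure unif01 :=
  ⟨by simp [unif01, Real.volume_Icc]⟩

lemma cdf_unif01 {α : ℝ} (hα : α ∈ Ioo (0 : ℝ) 1) : cdf unif01 α = α := by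
  have hIcc : Iic α ∩ Icc 0 1 = Icc 0 α := by
    ext x
    simp only [mem_inter_iff, mem_Iic, mem_Icc]
    exact ⟨fun h => ⟨h.2.1, h.1⟩, fun h => ⟨h.2, h.1, h.2.trans hα.2.le⟩⟩
  rw [cdf_eq_real, unif01, measureReal_restrict_apply measurableSet_Iic, hIcc,
    Real.volume_real_Icc_of_le hα.1.le, sub_zero]

lemma eq_unif01_of_cdf_eqOn_Ioo (ν : Measure ℝ) [IsProbabilityMeasure ν]
    (h : ∀ α ∈ Ioo (0 : ℝ) 1, cdf ν α = α) : ν = unif01 :=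
  Measure.eq_of_cdf _ _ <| StieltjesFunction.ext fun t => by
    rw [cdf_eq_max_zero_min_one_of_eqOn_Ioo ν h,
      cdf_eq_max_zero_min_one_of_eqOn_Ioo unif01 fun _ => cdf_unif01]

end Uniform

section ConditionalExpectation

variable {β γ : Type*} [MeasurableSpace β] [MeasurableSpace γ] {μ : Measure Ω}
  [IsFiniteMeasure μ]

lemma condExp_comap_ae_eq_of_ae_eq_comp {X : Ω → β} {X' : Ω → γ} {g : β → γ}
    (hX : Measurable X) (hX' : Measurable X') (hg : Measurable g)
    (hle : MeasurableSpace.comap X ‹_› ≤ MeasurableSpace.comap X' ‹_›)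
    (hX'X : X' =ᵐ[μ] g ∘ X) (f : Ω → ℝ) :
    μ[f | MeasurableSpace.comap X' ‹_›] =ᵐ[μ] μ[f | MeasurableSpace.comap X ‹_›] := by
  by_cases hf : Integrable f μ
  swap
  · simp [condExp_of_not_integrable hf]
  refine (ae_eq_condExp_of_forall_setIntegral_eq hX'.comap_le hf
    (fun s _ _ => integrable_condExp.integrableOn) ?_
    (stronglyMeasurable_condExp.mono hle).aestronglyMeasurable).symm
  rintro _ ⟨B, hB, rfl⟩ -
  have hpre : X' ⁻¹' B =ᵐ[μ] X ⁻¹' (g ⁻¹' B) :=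
    eventuallyEq_set.2 (hX'X.mono fun ω hω => by simp [hω])
  calc ∫ ω in X' ⁻¹' B, μ[f | MeasurableSpace.comap X ‹_›] ω ∂μ
      = ∫ ω in X ⁻¹' (g ⁻¹' B), μ[f | MeasurableSpace.comap X ‹_›] ω ∂μ :=
        setIntegral_congr_set hpre
    _ = ∫ ω in X ⁻¹' (g ⁻¹' B), f ω ∂μ := setIntegral_condExp hX.comap_le hf ⟨_, hg hB, rfl⟩
    _ = ∫ ω in X' ⁻¹' B, f ω ∂μ := setIntegral_congr_set hpre.symm

lemma condExp_indicator_le_ae_eq_cdfAt_condDistrib {X : Ω → β} {Y : Ω → ℝ} {g : β → ℝ}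
    (hX : Measurable X) (hY : Measurable Y) (hg : Measurable g) :
    μ[{ω | Y ω ≤ g (X ω)}.indicator fun _ => (1 : ℝ) | MeasurableSpace.comap X ‹_›]
      =ᵐ[μ] fun ω => cdfAt (condDistrib Y X μ (X ω)) (g (X ω)) := by
  have hB : MeasurableSet {p : β × ℝ | p.2 ≤ g p.1} :=
    measurableSet_le measurable_snd (hg.comp measurable_fst)
  refine (condExp_prod_ae_eq_integral_condDistrib' hX hY.aemeasurable
    ((integrable_const (1 : ℝ)).indicator hB)).trans (ae_of_all _ fun ω => ?_)
  exact (integral_indicator_one measurableSet_Iic :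
    ∫ y, (Iic (g (X ω))).indicator 1 y ∂(condDistrib Y X μ (X ω)) = _)

lemma measureReal_eq_of_condExp_indicator_ae_eq_const [IsProbabilityMeasure μ] {X : Ω → β}
    (hX : Measurable X) {s : Set Ω} (hs : MeasurableSet s) {c : ℝ}
    (h : μ[s.indicator fun _ => (1 : ℝ) | MeasurableSpace.comap X ‹_›] =ᵐ[μ] fun _ => c) :
    μ.real s = c := by
  rw [← integral_indicator_one hs, ← integral_condExp hX.comap_le, Pi.one_def,
    integral_congr_ae h, integral_const, probReal_univ, one_smul]

end ConditionalExpectation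

lemma measurable_measure_prodMk_left_of_measurable {β : Type*} [MeasurableSpace β]
    {ν : Ω → Measure β} (hν : Measurable ν) (hprob : ∀ ω, IsProbabilityMeasure (ν ω))
    {t : Set (Ω × β)} (ht : MeasurableSet t) : Measurable fun ω => ν ω (Prod.mk ω ⁻¹' t) :=
  have : IsMarkovKernel (⟨ν, hν⟩ : Kernel Ω β) := ⟨hprob⟩
  Kernel.measurable_kernel_prodMk_left (κ := ⟨ν, hν⟩) ht

section PredictionSpace

variable {μ : Measure Ω} {F : Ω → Measure ℝ} {Y U : Ω → ℝ}

lemma IsPredictionSpace.measurable_PIT (hps : IsPredictionSpace μ F Y U) :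
    Measurable (PIT F Y U) := by
  have hY : Measurable fun p : Ω × ℝ => Y p.1 := hps.measY.comp measurable_fst
  have hIic : Measurable fun ω => cdfAt (F ω) (Y ω) :=
    (measurable_measure_prodMk_left_of_measurable hps.measF hps.probF
      (measurableSet_le measurable_snd hY)).ennreal_toReal
  have hIio : Measurable fun ω => cdfLt (F ω) (Y ω) :=
    (measurable_measure_prodMk_left_of_measurable hps.measF hps.probF
      (measurableSet_lt measurable_snd hY)).ennreal_toReal
  exact hIio.add (hps.measU.mul (hIic.sub hIio))

theorem IsPredictionSpace.probCalibrated_of_cepCalibrated (hps : IsPredictionSpace μ F Y U)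
    (hℓ : ∀ α ∈ Ioo (0 : ℝ) 1, Measurable fun ω => lowerQuantile (F ω) α)
    (hcep : CEPCalibrated μ F Y U) : ProbCalibrated μ F Y U := by
  have := hps.isProb
  have hPIT := hps.measurable_PIT
  have := Measure.isProbabilityMeasure_map (μ := μ) hPIT.aemeasurable
  refine eq_unif01_of_cdf_eqOn_Ioo _ fun α hα => ?_
  rw [cdf_eq_real, map_measureReal_apply hPIT measurableSet_Iic]
  exact measureReal_eq_of_condExp_indicator_ae_eq_const (hℓ α hα)
    (measurableSet_le hPIT measurable_const) (hcep α hα)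

theorem IsPredictionSpace.cepCalibratedAt_iff_quantileCalibratedAt [IsProbabilityMeasure μ]
    (hps : IsPredictionSpace μ F Y U) {S : Set ℝ} (hS : S.OrdConnected)
    (hF : ∀ᵐ ω ∂μ, IsStrictCDFOn (F ω) S) {α : ℝ} (hα : α ∈ Ioo 0 1)
    (hP : Measurable (qPairOf F α))
    (hν : ∀ᵐ ω ∂μ, IsStrictCDFOn (condDistrib Y (qPairOf F α) μ (qPairOf F α ω)) S) :
    (μ[{ω | PIT F Y U ω ≤ α}.indicator fun _ => (1 : ℝ) |
        MeasurableSpace.comap (fun ω => lowerQuantile (F ω) α) inferInstance] =ᵐ[μ] fun _ => α) ↔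
      ∀ᵐ ω ∂μ,
        lowerQuantile (condDistrib Y (qPairOf F α) μ (qPairOf F α ω)) α
          = lowerQuantile (F ω) α ∧
        upperQuantile (condDistrib Y (qPairOf F α) μ (qPairOf F α ω)) α
          = upperQuantile (F ω) α := by
  have := hps.probF
  have hℓ : Measurable fun ω => lowerQuantile (F ω) α := measurable_fst.comp hP
  have hPIT : ({ω | PIT F Y U ω ≤ α}.indicator fun _ => (1 : ℝ))
      =ᵐ[μ] {ω | Y ω ≤ (qPairOf F α ω).1}.indicator fun _ => (1 : ℝ) := by
    filter_upwards [hF] with ω hω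
    have hZ : PIT F Y U ω = cdfAt (F ω) (Y ω) := by
      rw [PIT, cdfLt_eq_cdfAt hω.continuous]
      ring
    simp only [indicator, mem_ofPred_eq, hZ, hω.cdfAt_le_iff_le_lowerQuantile hS hα, qPairOf]
    congr
  have hPℓ : qPairOf F α =ᵐ[μ] (fun x => (x, x)) ∘ fun ω => lowerQuantile (F ω) α := by
    filter_upwards [hF] with ω hω
    simp [qPairOf, hω.upperQuantile_eq_lowerQuantile hS hα]
  have hcond : μ[{ω | PIT F Y U ω ≤ α}.indicator fun _ => (1 : ℝ) |
        MeasurableSpace.comap (fun ω => lowerQuantile (F ω) α) inferInstance]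
      =ᵐ[μ] fun ω => cdfAt (condDistrib Y (qPairOf F α) μ (qPairOf F α ω))
        (lowerQuantile (F ω) α) :=
    (condExp_congr_ae hPIT).trans <|
      (condExp_comap_ae_eq_of_ae_eq_comp hℓ hP (by fun_prop)
        (Measurable.comap_le (f := fun ω => lowerQuantile (F ω) α)
          (measurable_fst.comp (comap_measurable _))) hPℓ _).symm.trans <|
      condExp_indicator_le_ae_eq_cdfAt_condDistrib hP hps.measY measurable_fst
  rw [hcond.congr_left]
  refine eventually_congr ?_
  filter_upwards [hF, hν] with ω hFω hνω
  rw [hνω.cdfAt_eq_iff_lowerQuantile_eq hS hα, hνω.upperQuantile_eq_lowerQuantile hS hα,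
    hFω.upperQuantile_eq_lowerQuantile hS hα, and_self]

end PredictionSpace

/-- **Theorem (Statement 4).** If all CDFs in the class `𝓕` (containing `F` almost surely)
are continuous and strictly increasing on a shared support interval, and Assumption (T)
holds for all quantile functionals, then CEP calibration and quantile calibration are
equivalent, and each implies probabilistic calibration. -/
theorem cep_iff_quantile_and_implies_prob
    {Ω : Type*} [MeasurableSpace Ω] (μ : Measure Ω) [IsProbabilityMeasure μ]
    (F : Ω → Measure ℝ) (Y U : Ω → ℝ) (hps : IsPredictionSpace μ F Y U)
    (𝓕 : Set (Measure ℝ)) (hF𝓕 : ∀ᵐ ω ∂μ, F ω ∈ 𝓕)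
    (hcsi : CSI 𝓕)
    -- Assumption (T) for all quantile functionals:
    (hqmeas : ∀ α ∈ Set.Ioo (0:ℝ) 1, Measurable (qPairOf F α))
    (hqcond : ∀ α ∈ Set.Ioo (0:ℝ) 1, ∀ᵐ ω ∂μ,
      condDistrib Y (qPairOf F α) μ (qPairOf F α ω) ∈ 𝓕) :
    (CEPCalibrated μ F Y U ↔ QuantileCalibrated μ F Y) ∧
    (CEPCalibrated μ F Y U → ProbCalibrated μ F Y U) := by
  obtain ⟨S, -, hS, hS𝓕⟩ := hcsi
  have h𝓕 : ∀ G ∈ 𝓕, IsStrictCDFOn G S := fun G hG =>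
    ⟨(hS𝓕 G hG).1, (hS𝓕 G hG).2.1, (hS𝓕 G hG).2.2⟩
  have hiff : ∀ α ∈ Ioo (0 : ℝ) 1, _ := fun α hα =>
    hps.cepCalibratedAt_iff_quantileCalibratedAt hS (hF𝓕.mono fun ω => h𝓕 _) hα (hqmeas α hα)
      ((hqcond α hα).mono fun ω => h𝓕 _)
  refine ⟨⟨fun h α hα => (hiff α hα).1 (h α hα), fun h α hα => (hiff α hα).2 (h α hα)⟩, ?_⟩
  exact hps.probCalibrated_of_cepCalibrated fun α hα => measurable_fst.comp (hqmeas α hα)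

end
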